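/- Fix integers m ≥ 2, d ≥ 0, integers r_1, …, r_d with 1 ≤ r_i ≤ m−1, an integer q ≥ d, an integer ρ with 0 ≤ ρ < m, and N ≥ 0. Then the coefficient of x^N in the power series p_{m−ρ−1}(x)·(∏_{i=1}^d p_{r_i}(x))·p_m(x)^{−(q+1)} ∈ ℚ[[x]] equals the number of (q+1)-tuples (P_0, P_1, …, P_q) of Dyck paths for which there exist nonnegative integers u_0, …, u_q with u_0+⋯+u_q = N, P_0 is counted by D_m(0, m−ρ−1; u_0), for 1 ≤ i ≤ d the path P_i is counted by D_m(r_i, 0; u_i), and for d+1 ≤ ν ≤ q the path P_ν is counted by D_m(0, 0; u_ν). -/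

import Mathlib

/-!
A path counted by `D_m(a, b; u)` is determined by its part between the forced initial up-steps
and final down-steps, which is an arbitrary walk with steps `±1` on `{0, …, m-1}` from `a` to
`m-1-b` of length `(m-1-b-a) + 2u`. For `i ≤ j < m` let `F i j = ∑ᵤ wᵤ xᵘ`, where `wᵤ` counts
such walks from `i` to `j` of length `j-i+2u`. Splitting off the first step gives
`F i j = F (i+1) j + x F (i-1) j` for `i < j` and, after reversing walks,
`F i i = 1 + x (F i (i+1) + F (i-1) i)`, where terms leaving `{0, …, m-1}` are dropped.
By the recurrence of `p` and the identity `p_{a+1} p_{b+1} = p_{a+b+2} + x p_a p_b`, the series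
`p_i p_{m-1-j} / p_m` satisfy the same system, and the system has at most one solution: each
equation determines a coefficient from lower coefficients or from a smaller `j - i`. The theorem is
the coefficient of `x^N` in `F 0 ρ · ∏ᵢ F rᵢ (m-1) · F 0 (m-1) ^ (q-d)`.
-/

/-- The Chebyshev-type polynomial sequence: `p 0 = p 1 = 1`,
`p (r+2) = p (r+1) - X * p r`. -/
noncomputable def chebP : ℕ → Polynomial ℚ
  | 0 => 1
  | 1 => 1
  | (r+2) => chebP (r+1) - Polynomial.X * chebP r

/-- The height of a lattice path after its first `i` steps, where the path is
encoded as `st : Fin n → Bool` (`true` = up-step `U = (1,1)`,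
`false` = down-step `D = (1,-1)`), starting at `(0,0)`. -/
def heightAt {n : ℕ} (st : Fin n → Bool) (i : ℕ) : ℤ :=
  ∑ j ∈ Finset.univ.filter (fun j : Fin n => (j : ℕ) < i),
    (if st j then (1 : ℤ) else -1)

/-- `dyckCount m a b u` is the number of Dyck paths (lattice paths from `(0,0)`
ending on the x-axis with steps `U = (1,1)`, `D = (1,-1)` that never go below
the x-axis) of height at most `m-1` and semilength `m-1-b+u` whose first `a`
steps are up-steps and whose last `m-1-b` steps are down-steps. -/
noncomputable def dyckCount (m a b u : ℕ) : ℕ :=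
  Nat.card {st : Fin (2 * (m - 1 - b + u)) → Bool //
    heightAt st (2 * (m - 1 - b + u)) = 0 ∧
    (∀ i ≤ 2 * (m - 1 - b + u), 0 ≤ heightAt st i ∧ heightAt st i ≤ (m : ℤ) - 1) ∧
    (∀ j : Fin (2 * (m - 1 - b + u)), (j : ℕ) < a → st j = true) ∧
    (∀ j : Fin (2 * (m - 1 - b + u)),
        2 * (m - 1 - b + u) - (m - 1 - b) ≤ (j : ℕ) → st j = false)}

def stripWalks (m : ℕ) : ℕ → ℕ → ℕ → ℕ
  | 0, h, s => if h = s then 1 else 0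
  | l + 1, h, s =>
      (if h + 1 < m then stripWalks m l (h + 1) s else 0) +
      (if 0 < h then stripWalks m l (h - 1) s else 0)

lemma stripWalks_succ (m l h s : ℕ) :
    stripWalks m (l + 1) h s =
      (if h + 1 < m then stripWalks m l (h + 1) s else 0) +
      (if 0 < h then stripWalks m l (h - 1) s else 0) := rfl

lemma stripWalks_eq_zero_of_lt {m l h s : ℕ} (hl : h + l < s) : stripWalks m l h s = 0 := by
  induction l generalizing h with
  | zero => rw [stripWalks, if_neg (by omega)]
  | succ l ih =>
    simp [stripWalks, ih (show h + 1 + l < s by omega), ih (show h - 1 + l < s by omega)]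

lemma stripWalks_succ_right {m h s : ℕ} (hh : h < m) (hs : s < m) (l : ℕ) :
    stripWalks m (l + 1) h s =
      (if s + 1 < m then stripWalks m l h (s + 1) else 0) +
      (if 0 < s then stripWalks m l h (s - 1) else 0) := by
  induction l generalizing h with
  | zero => simp only [stripWalks]; split_ifs <;> omega
  | succ l ih =>
    simp only [stripWalks_succ m (l + 1) h s, stripWalks_succ m l h (s + 1),
      stripWalks_succ m l h (s - 1)]
    by_cases h1 : h + 1 < m <;> by_cases h0 : 0 < h <;>
      simp only [h1, h0, if_true, if_false] <;>
      (try rw [ih (by omega : h + 1 < m)]) <;> (try rw [ih (by omega : h - 1 < m)]) <;>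
      split_ifs <;> ring

lemma stripWalks_comm {m h s : ℕ} (hh : h < m) (hs : s < m) (l : ℕ) :
    stripWalks m l h s = stripWalks m l s h := by
  induction l generalizing h with
  | zero => simp only [stripWalks, eq_comm]
  | succ l ih =>
    rw [stripWalks, stripWalks_succ_right hs hh]
    congr 1 <;> split_ifs <;> first | rfl | exact ih (by omega)

lemma Nat.forall_le_succ_left {k : ℕ} {P : ℕ → Prop} :
    (∀ i ≤ k + 1, P i) ↔ P 0 ∧ ∀ i ≤ k, P (i + 1) := by
  simp only [← Nat.lt_succ_iff, Nat.forall_lt_succ_left]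

lemma Nat.card_subtype_fin_succ_bool {k : ℕ} (P : (Fin (k + 1) → Bool) → Prop) :
    Nat.card {st // P st} =
      Nat.card {t : Fin k → Bool // P (Fin.cons true t)} +
        Nat.card {t : Fin k → Bool // P (Fin.cons false t)} := by
  classical
  simp only [Nat.card_eq_fintype_card, Fintype.card_subtype, Finset.card_filter]
  rw [← Equiv.sum_comp (Fin.consEquiv fun _ => Bool), Fintype.sum_prod_type, Fintype.sum_bool]
  rfl

lemma Nat.card_subtype_and_left {α : Type*} (c : Prop) [Decidable c] (P : α → Prop) :
    Nat.card {x // c ∧ P x} = if c then Nat.card {x // P x} else 0 := by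
  split_ifs with hc <;> simp [hc]

def IsStripPath (m : ℕ) (h : ℤ) (a s : ℕ) {k : ℕ} (st : Fin k → Bool) : Prop :=
  h + heightAt st k = 0 ∧
  (∀ i ≤ k, 0 ≤ h + heightAt st i ∧ h + heightAt st i ≤ (m : ℤ) - 1) ∧
  (∀ j : Fin k, (j : ℕ) < a → st j = true) ∧
  (∀ j : Fin k, k - s ≤ (j : ℕ) → st j = false)

@[simp] lemma heightAt_zero {k : ℕ} (st : Fin k → Bool) : heightAt st 0 = 0 := by
  simp [heightAt]

lemma heightAt_cons {k : ℕ} (b : Bool) (t : Fin k → Bool) (i : ℕ) :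
    heightAt (Fin.cons b t) (i + 1) = (if b then 1 else -1) + heightAt t i := by
  simp only [heightAt, Finset.sum_filter, Fin.sum_univ_succ, Fin.cons_zero, Fin.cons_succ,
    Fin.val_zero, Fin.val_succ]
  simp

lemma isStripPath_nil {m : ℕ} (hm : 0 < m) {h : ℤ} {a s : ℕ} (st : Fin 0 → Bool) :
    IsStripPath m h a s st ↔ h = 0 := by
  simp only [IsStripPath, heightAt_zero, add_zero, Nat.le_zero, forall_eq, IsEmpty.forall_iff,
    and_true, and_iff_left_iff_imp]
  omega

lemma isStripPath_cons {m : ℕ} {h : ℤ} {a s k : ℕ} (b : Bool) (t : Fin k → Bool) :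
    IsStripPath m h a s (Fin.cons b t) ↔
      (0 ≤ h ∧ h ≤ (m : ℤ) - 1) ∧ (0 < a → b = true) ∧ (k < s → b = false) ∧
        IsStripPath m (h + if b then 1 else -1) (a - 1) s t := by
  have e1 : ∀ j : ℕ, j + 1 < a ↔ j < a - 1 := by omega
  have e2 : ∀ j : ℕ, k + 1 - s ≤ j + 1 ↔ k - s ≤ j := by omega
  have e3 : k + 1 - s ≤ 0 ↔ k < s := by omega
  simp only [IsStripPath, Nat.forall_le_succ_left, Fin.forall_fin_succ,
    Fin.cons_zero, Fin.cons_succ, heightAt_cons, heightAt_zero, Fin.val_zero, Fin.val_succ,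
    add_zero, add_assoc, e1, e2, e3]
  tauto

lemma card_isStripPath_succ {m : ℕ} (h : ℤ) (a s k : ℕ) :
    Nat.card {st : Fin (k + 1) → Bool // IsStripPath m h a s st} =
      (if 0 ≤ h ∧ h ≤ (m : ℤ) - 1 ∧ s ≤ k then
        Nat.card {t : Fin k → Bool // IsStripPath m (h + 1) (a - 1) s t} else 0) +
      (if 0 ≤ h ∧ h ≤ (m : ℤ) - 1 ∧ a = 0 then
        Nat.card {t : Fin k → Bool // IsStripPath m (h - 1) 0 s t} else 0) := by
  rw [Nat.card_subtype_fin_succ_bool]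
  simp only [isStripPath_cons, ↓reduceIte, Bool.true_eq_false, Bool.false_eq_true, imp_false,
    not_lt, Nat.pos_iff_ne_zero, not_not, imp_true_iff, true_and, ← sub_eq_add_neg, ← and_assoc,
    Nat.card_subtype_and_left]
  congr 1
  by_cases ha : a = 0 <;> simp [ha]

lemma IsStripPath.start_mem {m : ℕ} {h : ℤ} {a s k : ℕ} {st : Fin k → Bool}
    (hst : IsStripPath m h a s st) : 0 ≤ h ∧ h ≤ (m : ℤ) - 1 := by
  simpa using hst.2.1 0 (Nat.zero_le k)

lemma card_isStripPath_eq_zero {m : ℕ} {h : ℤ} {a s k : ℕ}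
    (hh : ¬(0 ≤ h ∧ h ≤ (m : ℤ) - 1)) :
    Nat.card {st : Fin k → Bool // IsStripPath m h a s st} = 0 :=
  have : IsEmpty {st : Fin k → Bool // IsStripPath m h a s st} :=
    ⟨fun st => hh st.2.start_mem⟩
  Nat.card_of_isEmpty

lemma card_isStripPath_sub_one {m h a s k : ℕ} :
    Nat.card {st : Fin k → Bool // IsStripPath m ((h : ℤ) - 1) a s st} =
      if 0 < h then Nat.card {st : Fin k → Bool // IsStripPath m (h - 1 : ℕ) a s st}
      else 0 := by
  split_ifs with h0
  · rw [Nat.cast_sub h0, Nat.cast_one]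
  · exact card_isStripPath_eq_zero (by omega)

lemma isStripPath_min_suffix {m : ℕ} {h : ℤ} {a s k : ℕ} (st : Fin k → Bool) :
    IsStripPath m h a (min s k) st ↔ IsStripPath m h a s st := by
  simp only [IsStripPath, show k - min s k = k - s by omega]

lemma card_isStripPath_descent {m h : ℕ} (hh : h < m) (k : ℕ) :
    Nat.card {st : Fin k → Bool // IsStripPath m h 0 k st} = stripWalks m 0 h k := by
  induction k generalizing h with
  | zero => by_cases h0 : h = 0 <;> simp [isStripPath_nil (by omega : 0 < m), stripWalks, h0]
  | succ k ih =>
    rw [card_isStripPath_succ, if_neg (by omega), zero_add, if_pos (by omega)]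
    simp_rw [← isStripPath_min_suffix (s := k + 1), min_eq_right (Nat.le_succ k),
      card_isStripPath_sub_one]
    split_ifs with h0
    · rw [ih (by omega), stripWalks, stripWalks]
      simp only [show h - 1 = k ↔ h = k + 1 by omega]
    · rw [stripWalks, if_neg (by omega)]

lemma card_isStripPath_no_prefix {m k s h : ℕ} (hs : s ≤ k) (hh : h < m) :
    Nat.card {st : Fin k → Bool // IsStripPath m h 0 s st} = stripWalks m (k - s) h s := by
  induction k generalizing h with
  | zero =>
    obtain rfl : s = 0 := by omega
    exact card_isStripPath_descent hh 0
  | succ k ih =>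
    rcases hs.eq_or_lt with rfl | hsk
    · rw [Nat.sub_self]
      exact card_isStripPath_descent hh _
    rw [card_isStripPath_succ, if_pos (by omega), if_pos (by omega), card_isStripPath_sub_one,
      show k + 1 - s = k - s + 1 by omega, stripWalks_succ]
    congr 1
    · split_ifs with h1
      · exact_mod_cast ih (by omega) h1
      · exact card_isStripPath_eq_zero (by omega)
    · split_ifs with h0
      · exact ih (by omega) (by omega)
      · rfl

lemma card_isStripPath {m k h a s : ℕ} (hh : h + a < m) (hk : a + s ≤ k) :
    Nat.card {st : Fin k → Bool // IsStripPath m h a s st} =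
      stripWalks m (k - a - s) (h + a) s := by
  induction a generalizing h k with
  | zero => simpa using card_isStripPath_no_prefix hk hh
  | succ a ih =>
    obtain ⟨k, rfl⟩ : ∃ k', k = k' + 1 := ⟨k - 1, by omega⟩
    rw [card_isStripPath_succ, if_pos (by omega), if_neg (by omega), add_zero,
      Nat.add_sub_cancel]
    rw [show k + 1 - (a + 1) - s = k - a - s by omega, show h + (a + 1) = h + 1 + a by omega]
    exact_mod_cast ih (by omega) (by omega)

open PowerSeries

noncomputable def walkSeries (m i j : ℕ) : ℚ⟦X⟧ :=
  mk fun u => (stripWalks m (j - i + 2 * u) i j : ℚ)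

lemma coeff_walkSeries (m i j u : ℕ) :
    coeff u (walkSeries m i j) = stripWalks m (j - i + 2 * u) i j :=
  coeff_mk _ _

lemma walkSeries_of_lt {m i j : ℕ} (hij : i < j) (hj : j < m) :
    walkSeries m i j =
      walkSeries m (i + 1) j + if 0 < i then X * walkSeries m (i - 1) j else 0 := by
  ext u
  rw [map_add, coeff_walkSeries, coeff_walkSeries,
    show j - i + 2 * u = j - (i + 1) + 2 * u + 1 by omega,
    stripWalks_succ, if_pos (by omega), Nat.cast_add]
  congr 1
  split_ifs with hi
  · rcases u with _ | u
    · simp [stripWalks_eq_zero_of_lt (show i - 1 + (j - (i + 1)) < j by omega)]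
    · rw [coeff_succ_X_mul, coeff_walkSeries,
        show j - (i - 1) + 2 * u = j - (i + 1) + 2 * (u + 1) by omega]
  · simp

lemma walkSeries_self {m i : ℕ} (hi : i < m) :
    walkSeries m i i = 1 + X * ((if i + 1 < m then walkSeries m i (i + 1) else 0) +
      (if 0 < i then walkSeries m (i - 1) i else 0)) := by
  ext u
  rcases u with _ | u
  · simp [coeff_walkSeries, stripWalks]
  · rw [map_add, coeff_succ_X_mul, coeff_one, if_neg (Nat.succ_ne_zero u), zero_add, map_add,
      coeff_walkSeries, show i - i + 2 * (u + 1) = (2 * u + 1) + 1 by omega, stripWalks_succ,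
      Nat.cast_add]
    congr 1 <;> split_ifs with h
    -- reversed, a closed walk that starts upwards is a walk from `i` to `i + 1`
    · rw [coeff_walkSeries, stripWalks_comm h hi, show i + 1 - i + 2 * u = 2 * u + 1 by omega]
    · simp
    · rw [coeff_walkSeries, show i - (i - 1) + 2 * u = 2 * u + 1 by omega]
    · simp

lemma chebP_zero : chebP 0 = 1 := rfl

lemma chebP_succ_succ (r : ℕ) : chebP (r + 2) = chebP (r + 1) - Polynomial.X * chebP r := rfl

lemma chebP_eq_succ_add (i : ℕ) :
    chebP i = chebP (i + 1) + if 0 < i then Polynomial.X * chebP (i - 1) else 0 := by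
  rcases i with _ | i
  · simp [chebP]
  · simp [chebP_succ_succ]

lemma chebP_succ_mul_chebP_succ (a b : ℕ) :
    chebP (a + 1) * chebP (b + 1) = chebP (a + b + 2) + Polynomial.X * (chebP a * chebP b) := by
  induction a generalizing b with
  | zero => simp [chebP]
  | succ a ih =>
    have h := ih (b + 1)
    rw [chebP_succ_succ b, show a + (b + 1) + 2 = a + 1 + b + 2 by ring] at h
    rw [chebP_succ_succ a]
    linear_combination h

lemma chebP_mul_chebP (a b : ℕ) :
    chebP a * chebP b = chebP (a + b + 1) + Polynomial.X *
      ((if 0 < b then chebP a * chebP (b - 1) else 0) +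
        (if 0 < a then chebP (a - 1) * chebP b else 0)) := by
  rcases a with _ | a <;> rcases b with _ | b
  · simp [chebP]
  · simp [chebP]
  · simp [chebP]
  · have h := chebP_succ_mul_chebP_succ (a + 1) b
    rw [chebP_succ_succ a] at h
    simp only [add_tsub_cancel_right, lt_add_iff_pos_left, Nat.zero_lt_succ, if_true]
    rw [show a + 1 + (b + 1) + 1 = a + 1 + b + 2 by ring]
    linear_combination h

lemma chebP_coeff_zero (n : ℕ) : (chebP n).coeff 0 = 1 := by
  induction n using Nat.twoStepInduction with
  | zero => simp [chebP]
  | one => simp [chebP]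
  | more n _ ih => simp [chebP_succ_succ, ih]

lemma eq_zero_of_walk_recursion {R : Type*} [Semiring R] {m : ℕ} (E : ℕ → ℕ → R⟦X⟧)
    (hlt : ∀ i j, i < j → j < m → E i j = E (i + 1) j + if 0 < i then X * E (i - 1) j else 0)
    (hself : ∀ i < m, E i i =
      X * ((if i + 1 < m then E i (i + 1) else 0) + (if 0 < i then E (i - 1) i else 0)))
    {i j : ℕ} (hij : i ≤ j) (hj : j < m) : E i j = 0 := by
  ext N
  rw [map_zero]
  induction N using Nat.strong_induction_on generalizing i j with
  | _ N ihN =>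
  have hX : ∀ i j, i ≤ j → j < m → coeff N (X * E i j) = 0 := by
    intro i j hij hj
    rcases N with _ | N
    · simp
    · rw [coeff_succ_X_mul]
      exact ihN N (Nat.lt_succ_self N) hij hj
  obtain ⟨c, rfl⟩ := Nat.exists_eq_add_of_le hij
  induction c generalizing i with
  | zero =>
    rw [add_zero] at hj ⊢
    rw [hself i hj, mul_add, map_add]
    split_ifs with h1 h2 h2 <;> simp [hX, h1, hj]
  | succ c ihc =>
    have hnext := ihc (i := i + 1) (by omega) (by omega)
    rw [show i + 1 + c = i + (c + 1) by omega] at hnext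
    rw [hlt i (i + (c + 1)) (by omega) hj, map_add, hnext, zero_add]
    split_ifs
    exacts [hX _ _ (by omega) hj, map_zero _]

lemma walkSeries_mul_chebP {m i j : ℕ} (hij : i ≤ j) (hj : j < m) :
    walkSeries m i j * (chebP m : ℚ⟦X⟧) =
      ((chebP i * chebP (m - 1 - j) : Polynomial ℚ) : ℚ⟦X⟧) := by
  rw [← sub_eq_zero]
  refine eq_zero_of_walk_recursion (m := m) (fun i j => walkSeries m i j * (chebP m : ℚ⟦X⟧) -
    ((chebP i * chebP (m - 1 - j) : Polynomial ℚ) : ℚ⟦X⟧))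
    (fun i j hij hj => ?_) (fun i hi => ?_) hij hj
  · rw [walkSeries_of_lt hij hj, chebP_eq_succ_add i]
    split_ifs <;> push_cast <;> ring
  · rw [walkSeries_self hi, chebP_mul_chebP i (m - 1 - i), show i + (m - 1 - i) + 1 = m by omega,
      show m - 1 - i - 1 = m - 1 - (i + 1) by omega]
    simp only [show 0 < m - 1 - i ↔ i + 1 < m by omega]
    split_ifs <;> push_cast <;> ring

lemma walkSeries_eq {m i j : ℕ} (hij : i ≤ j) (hj : j < m) :
    walkSeries m i j =
      ((chebP i * chebP (m - 1 - j) : Polynomial ℚ) : ℚ⟦X⟧) * (chebP m : ℚ⟦X⟧)⁻¹ :=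
  (eq_mul_inv_iff_mul_eq (by simp [chebP_coeff_zero])).2 (walkSeries_mul_chebP hij hj)

lemma dyckCount_eq_coeff_walkSeries {m a b : ℕ} (hab : a + b < m) (u : ℕ) :
    (dyckCount m a b u : ℚ) = coeff u (walkSeries m a (m - 1 - b)) := by
  have hcard : dyckCount m a b u = Nat.card {st : Fin (2 * (m - 1 - b + u)) → Bool //
      IsStripPath m (0 : ℕ) a (m - 1 - b) st} := by
    simp [dyckCount, IsStripPath]
  rw [coeff_walkSeries, hcard, card_isStripPath (by omega) (by omega), zero_add,
    show 2 * (m - 1 - b + u) - a - (m - 1 - b) = m - 1 - b - a + 2 * u by omega]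

lemma PowerSeries.coeff_mul_prod_fin {R : Type*} [CommSemiring R] {k : ℕ} (f : R⟦X⟧)
    (g : Fin k → R⟦X⟧) (n : ℕ) :
    coeff n (f * ∏ i, g i) =
      ∑ u ∈ Finset.Nat.antidiagonalTuple (k + 1) n,
        coeff (u 0) f * ∏ i, coeff (u i.succ) (g i) := by
  rw [← Fin.prod_cons, coeff_prod, Finset.finsuppAntidiag, Finset.sum_map,
    ← Finset.piAntidiag_univ_fin_eq_antidiagonalTuple]
  refine (Finset.sum_attach _ fun u : Fin (k + 1) → ℕ =>
    ∏ i, coeff (u i) ((Fin.cons f g : Fin (k + 1) → R⟦X⟧) i)).trans ?_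
  simp [Fin.prod_univ_succ]

lemma Fin.prod_dite_lt {M : Type*} [CommMonoid M] {d q : ℕ} (hdq : d ≤ q) (f : Fin d → M) :
    ∏ ν : Fin q, (if h : (ν : ℕ) < d then f ⟨ν, h⟩ else 1) = ∏ i, f i := by
  obtain ⟨e, rfl⟩ := Nat.exists_eq_add_of_le hdq
  simp [Fin.prod_univ_add]

lemma Polynomial.coe_prod {R ι : Type*} [CommSemiring R] (s : Finset ι)
    (f : ι → Polynomial R) :
    ((∏ i ∈ s, f i : Polynomial R) : R⟦X⟧) = ∏ i ∈ s, (f i : R⟦X⟧) :=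
  map_prod Polynomial.coeToPowerSeries.ringHom f s

lemma walkSeries_zero_left {m j : ℕ} (hj : j < m) :
    walkSeries m 0 j = (chebP (m - 1 - j) : ℚ⟦X⟧) * (chebP m : ℚ⟦X⟧)⁻¹ := by
  simpa [chebP_zero] using walkSeries_eq (Nat.zero_le j) hj

lemma walkSeries_top_right {m i : ℕ} (hi : i < m) :
    walkSeries m i (m - 1) = (chebP i : ℚ⟦X⟧) * (chebP m : ℚ⟦X⟧)⁻¹ := by
  simpa [chebP_zero] using walkSeries_eq (by omega : i ≤ m - 1) (by omega : m - 1 < m)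

theorem statement8_general (m d : ℕ) (r : Fin d → ℕ)
    (hr2 : ∀ i, r i ≤ m - 1)
    (q : ℕ) (hq : d ≤ q) (ρ : ℕ) (hρ : ρ < m) (N : ℕ) :
    PowerSeries.coeff (R := ℚ) N
      ((chebP (m - ρ - 1) : PowerSeries ℚ) *
        ((∏ i, chebP (r i) : Polynomial ℚ) : PowerSeries ℚ) *
        ((chebP m : PowerSeries ℚ))⁻¹ ^ (q + 1))
    = ∑ u ∈ Finset.Nat.antidiagonalTuple (q + 1) N,
        (dyckCount m 0 (m - ρ - 1) (u 0) : ℚ) *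
          ∏ ν : Fin q,
            (if h : (ν : ℕ) < d then
                (dyckCount m (r ⟨ν, h⟩) 0 (u ν.succ) : ℚ)
              else
                (dyckCount m 0 0 (u ν.succ) : ℚ)) := by
  -- the factors `D_m(0, 0; u)` are the case `r = 0` of `D_m(r, 0; u)`
  set r' : Fin q → ℕ := fun ν => if h : (ν : ℕ) < d then r ⟨ν, h⟩ else 0 with hr'_def
  have hr' : ∀ ν, r' ν < m := fun ν => by
    simp only [hr'_def]
    split_ifs with h
    · have := hr2 ⟨ν, h⟩
      omega
    · omega
  trans coeff N (walkSeries m 0 ρ * ∏ ν, walkSeries m (r' ν) (m - 1))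
  · have hnum : ∏ ν, chebP (r' ν) = ∏ i, chebP (r i) := by
      simp only [hr'_def, apply_dite chebP, chebP_zero]
      exact Fin.prod_dite_lt hq fun i => chebP (r i)
    rw [walkSeries_zero_left hρ, Finset.prod_congr rfl fun ν _ => walkSeries_top_right (hr' ν),
      Finset.prod_mul_distrib, Finset.prod_const, Finset.card_univ, Fintype.card_fin,
      ← Polynomial.coe_prod, hnum, show m - 1 - ρ = m - ρ - 1 by omega]
    congr 1
    ring
  · rw [coeff_mul_prod_fin]
    refine Finset.sum_congr rfl fun u _ => ?_
    rw [dyckCount_eq_coeff_walkSeries (a := 0) (b := m - ρ - 1) (by omega),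
      show m - 1 - (m - ρ - 1) = ρ by omega]
    congr 1
    refine Finset.prod_congr rfl fun ν _ => ?_
    have hcount := dyckCount_eq_coeff_walkSeries (b := 0) (by simpa using hr' ν) (u ν.succ)
    rw [Nat.sub_zero] at hcount
    rw [← hcount]
    split_ifs with h <;> simp [hr'_def, h]

/-- fix `m ≥ 2`, `d ≥ 0`, `r₁,…,r_d` with `1 ≤ rᵢ ≤ m-1`,
`q ≥ d`, `0 ≤ ρ < m`, `N ≥ 0`.  The coefficient of `x^N` in
`p_{m-ρ-1}(x)·(∏ᵢ p_{rᵢ}(x))·p_m(x)^{-(q+1)} ∈ ℚ[[x]]` equals the number of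
`(q+1)`-tuples `(P₀,…,P_q)` of Dyck paths such that for some `u₀+⋯+u_q = N`,
`P₀` is counted by `D_m(0, m-ρ-1; u₀)`, `Pᵢ` is counted by `D_m(rᵢ, 0; uᵢ)`
for `1 ≤ i ≤ d`, and `P_ν` is counted by `D_m(0,0;u_ν)` for `d+1 ≤ ν ≤ q`;
that is, it equals the corresponding sum of products of path counts. -/
theorem statement8 (m d : ℕ) (hm : 2 ≤ m) (r : Fin d → ℕ)
    (hr1 : ∀ i, 1 ≤ r i) (hr2 : ∀ i, r i ≤ m - 1)
    (q : ℕ) (hq : d ≤ q) (ρ : ℕ) (hρ : ρ < m) (N : ℕ) :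
    PowerSeries.coeff (R := ℚ) N
      ((chebP (m - ρ - 1) : PowerSeries ℚ) *
        ((∏ i, chebP (r i) : Polynomial ℚ) : PowerSeries ℚ) *
        ((chebP m : PowerSeries ℚ))⁻¹ ^ (q + 1))
    = ∑ u ∈ Finset.Nat.antidiagonalTuple (q + 1) N,
        (dyckCount m 0 (m - ρ - 1) (u 0) : ℚ) *
          ∏ ν : Fin q,
            (if h : (ν : ℕ) < d then
                (dyckCount m (r ⟨ν, h⟩) 0 (u ν.succ) : ℚ)
              else
                (dyckCount m 0 0 (u ν.succ) : ℚ)) :=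
  statement8_general m d r hr2 q hq ρ hρ N
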